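/- arXiv:1506.07010 — 2 statements merged into one kernel-verified Lean document; each statement's English description precedes it below -/
import Mathlib

section
/- For every n ≥ 1 and k ≥ 0, the functions S_{n,k} satisfy on the half-plane {z ∈ ℂ : Re z > −1/2} the recurrence S_{n,k+1}(z) = (z(1+z)/n) · S_{n,k}′(z) + ((nz+k)/n) · S_{n,k}(z), where S_{n,k}′ denotes the complex derivative. -/
open MeasureTheory

/-- The Baskakov basis function `b_{n,v}(z) = C(n+v−1, v) · z^v / (1+z)^{n+v}`. -/
noncomputable def baskakovBasis (n v : ℕ) (z : ℂ) : ℂ :=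
  ((n + v - 1).choose v : ℂ) * z ^ v / (1 + z) ^ (n + v)

/-- The `k`-th moment of the Szász basis function `s_{n,v}`:
`∫_0^∞ e^{−nt} (nt)^v / v! · t^k dt`. -/
noncomputable def szaszMoment (n v k : ℕ) : ℝ :=
  ∫ t in Set.Ioi (0 : ℝ), Real.exp (-((n : ℝ) * t)) * ((n : ℝ) * t) ^ v / (v.factorial : ℝ) * t ^ k

/-- `S_{n,k}(z) = n · Σ_{v=1}^∞ b_{n,v}(z) · ∫_0^∞ s_{n,v−1}(t) t^k dt + (1+z)^{−n} · 0^k`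
(the last term appearing only for `k = 0`, since `0^0 = 1` and `0^k = 0` for `k ≥ 1`). -/
noncomputable def S (n k : ℕ) (z : ℂ) : ℂ :=
  (n : ℂ) * ∑' v : ℕ, baskakovBasis n (v + 1) z * (szaszMoment n v k : ℂ)
    + (1 + z) ^ (-(n : ℤ)) * (0 : ℂ) ^ k

/-!
For `v ≥ 1`, the Gamma integral gives `n ∫₀^∞ s_{n,v-1}(t) t^k dt = v (v+1) ⋯ (v+k-1) / n^k`, and
at `v = 0` this rising factorial is `0^k`, the coefficient of the extra term
`(1+z)^{-n} = b_{n,0}(z)`. So `S_{n,k} = ∑_{v ≥ 0} c_k(v) b_{n,v}` with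
`c_{k+1}(v) = (v+k)/n · c_k(v)`.
Together with `z(1+z) b_{n,v}' = (v - nz) b_{n,v}` this makes the recurrence a termwise identity.
Near a point of the half-plane, `|w/(1+w)| ≤ Q < 1` and `|1+w| > 1/2`, so the terms are dominated
by `C (v+1)^{n+k} Q^v` and the series can be differentiated termwise.
-/

open scoped Topology Nat

lemma integral_pow_mul_exp_neg_mul_Ioi (m : ℕ) {r : ℝ} (hr : 0 < r) :
    ∫ t in Set.Ioi (0 : ℝ), t ^ m * Real.exp (-(r * t)) = m ! / r ^ (m + 1) := by
  have h := Real.integral_rpow_mul_exp_neg_mul_Ioi (a := m + 1) (by positivity) hr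
  simp only [add_sub_cancel_right, Real.rpow_natCast, Real.Gamma_nat_eq_factorial] at h
  rw [h, ← Nat.cast_succ, Real.rpow_natCast, one_div, inv_pow, inv_mul_eq_div]

lemma natCast_mul_szaszMoment {n : ℕ} (hn : 1 ≤ n) (v k : ℕ) :
    (n : ℝ) * szaszMoment n v k = (v + 1).ascFactorial k / (n : ℝ) ^ k := by
  have hn0 : (0 : ℝ) < n := by exact_mod_cast hn
  have hintegrand : (fun t : ℝ => Real.exp (-(n * t)) * (n * t) ^ v / (v ! : ℝ) * t ^ k) =
      fun t => ((n : ℝ) ^ v / v !) * (t ^ (v + k) * Real.exp (-(n * t))) := by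
    funext t
    ring
  rw [szaszMoment, hintegrand, integral_const_mul, integral_pow_mul_exp_neg_mul_Ioi _ hn0,
    ← Nat.factorial_mul_ascFactorial]
  field_simp
  push_cast
  ring

-- With an integer exponent, the derivative of `(1 + w)^{-(n+v)}` involves no truncated subtraction.
lemma baskakovBasis_eq_mul_zpow (n v : ℕ) :
    baskakovBasis n v =
      fun w : ℂ => ((n + v - 1).choose v : ℂ) * w ^ v * (1 + w) ^ (-(n + v : ℤ)) := by
  funext w
  rw [baskakovBasis, zpow_neg, div_eq_mul_inv]
  norm_cast

lemma hasDerivAt_baskakovBasis (n v : ℕ) {z : ℂ} (hz : 1 + z ≠ 0) :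
    HasDerivAt (baskakovBasis n v)
      ((n + v - 1).choose v * (v * z ^ (v - 1) * (1 + z) ^ (-(n + v : ℤ))
        - (n + v) * z ^ v * (1 + z) ^ (-(n + v : ℤ) - 1))) z := by
  have hden := (hasDerivAt_zpow (-(n + v : ℤ)) (1 + z) (.inl hz)).comp z
    ((hasDerivAt_id z).const_add 1)
  rw [baskakovBasis_eq_mul_zpow]
  refine (((hasDerivAt_pow v z).const_mul ((n + v - 1).choose v : ℂ)).mul hden).congr_deriv ?_
  simp only [Function.comp_apply]
  push_cast
  ring

lemma mul_deriv_baskakovBasis (n v : ℕ) {z : ℂ} (hz : 1 + z ≠ 0) :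
    z * (1 + z) * deriv (baskakovBasis n v) z = (v - n * z) * baskakovBasis n v z := by
  have hpow : z * (v * z ^ (v - 1)) = v * z ^ v := by
    rcases v with _ | v
    · simp
    · rw [Nat.add_sub_cancel, pow_succ]
      ring
  rw [(hasDerivAt_baskakovBasis n v hz).deriv, baskakovBasis_eq_mul_zpow, zpow_sub_one₀ hz]
  linear_combination (n + v - 1).choose v * (1 + z) ^ (-(n + v : ℤ)) * (1 + z) * hpow
    - (n + v - 1).choose v * (n + v) * z ^ (v + 1) * (1 + z) ^ (-(n + v : ℤ)) * mul_inv_cancel₀ hz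

lemma norm_lt_norm_one_add {w : ℂ} (hw : -1 / 2 < w.re) : ‖w‖ < ‖1 + w‖ := by
  rw [← sq_lt_sq₀ (norm_nonneg _) (norm_nonneg _), Complex.sq_norm, Complex.sq_norm,
    Complex.normSq_apply, Complex.normSq_apply]
  simp only [Complex.add_re, Complex.add_im, Complex.one_re, Complex.one_im]
  nlinarith

lemma half_lt_norm_one_add {w : ℂ} (hw : -1 / 2 < w.re) : 1 / 2 < ‖1 + w‖ := by
  have := Complex.re_le_norm (1 + w)
  simp only [Complex.add_re, Complex.one_re] at this
  linarith

lemma one_add_ne_zero_of_neg_half_lt_re {w : ℂ} (hw : -1 / 2 < w.re) : 1 + w ≠ 0 :=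
  norm_pos_iff.mp ((half_lt_norm_one_add hw).trans' (by norm_num))

lemma choose_add_sub_one_le (n v : ℕ) : (n + v - 1).choose v ≤ (n + 1) ^ n * (v + 1) ^ n :=
  calc (n + v - 1).choose v ≤ (v + n).choose n := by
        rw [← Nat.choose_symm_add]
        exact Nat.choose_le_choose v (by omega)
    _ ≤ (v + n) ^ n := Nat.choose_le_pow _ _
    _ ≤ ((n + 1) * (v + 1)) ^ n := Nat.pow_le_pow_left (by nlinarith) n
    _ = (n + 1) ^ n * (v + 1) ^ n := Nat.mul_pow _ _ _

lemma norm_baskakovBasis_le (n v : ℕ) {w : ℂ} (hw : -1 / 2 < w.re) :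
    ‖baskakovBasis n v w‖ ≤ (n + 1) ^ n * (v + 1) ^ n * 2 ^ n * (‖w‖ / ‖1 + w‖) ^ v := by
  have hpos : 0 < ‖1 + w‖ := (half_lt_norm_one_add hw).trans' (by norm_num)
  have hchoose : ((n + v - 1).choose v : ℝ) ≤ (n + 1) ^ n * (v + 1) ^ n := by
    exact_mod_cast choose_add_sub_one_le n v
  have hinv : ‖1 + w‖⁻¹ ^ n ≤ 2 ^ n := by
    gcongr
    rw [inv_le_comm₀ hpos two_pos]
    linarith [half_lt_norm_one_add hw]
  have hnorm : ‖baskakovBasis n v w‖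
      = ((n + v - 1).choose v : ℝ) * ‖1 + w‖⁻¹ ^ n * (‖w‖ / ‖1 + w‖) ^ v := by
    rw [baskakovBasis, norm_div, norm_mul, norm_pow, norm_pow, Complex.norm_natCast, pow_add,
      div_pow, inv_pow]
    field_simp
  rw [hnorm]
  gcongr

lemma summable_add_one_pow_mul_geometric (p : ℕ) {Q : ℝ} (hQ0 : 0 < Q) (hQ1 : Q < 1) :
    Summable fun v : ℕ => ((v : ℝ) + 1) ^ p * Q ^ v := by
  have hQ : ‖Q‖ < 1 := by rwa [Real.norm_eq_abs, abs_of_pos hQ0]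
  have h : Summable fun v : ℕ => ((v + 1 : ℕ) : ℝ) ^ p * Q ^ (v + 1) :=
    (summable_nat_add_iff (f := fun v : ℕ => (v : ℝ) ^ p * Q ^ v) 1).2
      (summable_pow_mul_geometric_of_norm_lt_one p hQ)
  refine (h.mul_left Q⁻¹).congr fun v => ?_
  rw [pow_succ]
  push_cast
  field_simp

noncomputable def baskakovSeries (n : ℕ) (c : ℕ → ℂ) (z : ℂ) : ℂ :=
  ∑' v, baskakovBasis n v z * c v

section baskakovSeries

variable {n : ℕ} {c : ℕ → ℂ} {A : ℝ} {p : ℕ} {z : ℂ}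

lemma exists_ball_forall_norm_baskakovBasis_mul_le (hc : ∀ v, ‖c v‖ ≤ A * ((v : ℝ) + 1) ^ p)
    (hz : -1 / 2 < z.re) :
    ∃ r > 0, ∃ u : ℕ → ℝ, Summable u ∧ ∀ w ∈ Metric.ball z r,
      -1 / 2 < w.re ∧ ∀ v, ‖baskakovBasis n v w * c v‖ ≤ u v := by
  have hρ : ContinuousAt (fun w : ℂ => ‖w‖ / ‖1 + w‖) z :=
    continuous_norm.continuousAt.div (continuous_const.add continuous_id).norm.continuousAt
      (norm_ne_zero_iff.2 (one_add_ne_zero_of_neg_half_lt_re hz))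
  obtain ⟨Q, hρQ, hQ1⟩ := exists_between ((div_lt_one ((half_lt_norm_one_add hz).trans'
    (by norm_num))).2 (norm_lt_norm_one_add hz))
  have hQ0 : 0 < Q := hρQ.trans_le' (by positivity)
  obtain ⟨r, hr, hball⟩ := Metric.eventually_nhds_iff_ball.1 <|
    (hρ.eventually (gt_mem_nhds hρQ)).and
      ((isOpen_lt continuous_const Complex.continuous_re).mem_nhds hz)
  refine ⟨r, hr, fun v => A * (n + 1) ^ n * 2 ^ n * (((v : ℝ) + 1) ^ (n + p) * Q ^ v),
    (summable_add_one_pow_mul_geometric _ hQ0 hQ1).mul_left _,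
    fun w hw => ⟨(hball w hw).2, fun v => ?_⟩⟩
  rw [norm_mul]
  calc ‖baskakovBasis n v w‖ * ‖c v‖
      ≤ ((n + 1) ^ n * (v + 1) ^ n * 2 ^ n * Q ^ v) * (A * ((v : ℝ) + 1) ^ p) := by
        refine mul_le_mul ((norm_baskakovBasis_le n v (hball w hw).2).trans ?_) (hc v)
          (norm_nonneg _) (by positivity)
        gcongr
        exact (hball w hw).1.le
    _ = A * (n + 1) ^ n * 2 ^ n * (((v : ℝ) + 1) ^ (n + p) * Q ^ v) := by ring

lemma summable_baskakovBasis_mul (hc : ∀ v, ‖c v‖ ≤ A * ((v : ℝ) + 1) ^ p)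
    (hz : -1 / 2 < z.re) : Summable fun v => baskakovBasis n v z * c v := by
  obtain ⟨r, hr, u, hu, hbound⟩ := exists_ball_forall_norm_baskakovBasis_mul_le (n := n) hc hz
  exact .of_norm_bounded hu ((hbound z (Metric.mem_ball_self hr)).2)

lemma hasSum_deriv_baskakovSeries (hc : ∀ v, ‖c v‖ ≤ A * ((v : ℝ) + 1) ^ p)
    (hz : -1 / 2 < z.re) :
    HasSum (fun v => deriv (baskakovBasis n v) z * c v) (deriv (baskakovSeries n c) z) := by
  obtain ⟨r, hr, u, hu, hbound⟩ := exists_ball_forall_norm_baskakovBasis_mul_le (n := n) hc hz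
  have hdiff (v : ℕ) : DifferentiableOn ℂ (fun w => baskakovBasis n v w * c v) (Metric.ball z r) :=
    fun w hw => ((hasDerivAt_baskakovBasis n v (one_add_ne_zero_of_neg_half_lt_re
      (hbound w hw).1)).differentiableAt.mul_const _).differentiableWithinAt
  have hderiv (v : ℕ) :
      deriv (fun w => baskakovBasis n v w * c v) z = deriv (baskakovBasis n v) z * c v :=
    deriv_mul_const (hasDerivAt_baskakovBasis n v
      (one_add_ne_zero_of_neg_half_lt_re hz)).differentiableAt _
  have h := Complex.hasSum_deriv_of_summable_norm hu hdiff Metric.isOpen_ball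
    (fun v w hw => (hbound w hw).2 v) (Metric.mem_ball_self hr)
  simp only [hderiv] at h
  exact h

end baskakovSeries

noncomputable def szaszCoeff (n k v : ℕ) : ℂ :=
  v.ascFactorial k / n ^ k

lemma norm_szaszCoeff_le {n : ℕ} (hn : 1 ≤ n) (k v : ℕ) :
    ‖szaszCoeff n k v‖ ≤ k ! * ((v : ℝ) + 1) ^ k := by
  have hasc : (v.ascFactorial k : ℝ) ≤ k ! * ((v : ℝ) + 1) ^ k := by
    calc (v.ascFactorial k : ℝ) ≤ (k ! * v ^ k : ℕ) := by
          exact_mod_cast Nat.ascFactorial_le_factorial_mul_pow v k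
      _ ≤ k ! * ((v : ℝ) + 1) ^ k := by
          push_cast
          gcongr
          linarith
  rw [szaszCoeff, norm_div, norm_pow, Complex.norm_natCast, Complex.norm_natCast]
  exact (_root_.div_le_self (by positivity) (one_le_pow₀ (by exact_mod_cast hn))).trans hasc

lemma szaszCoeff_succ (n k v : ℕ) : szaszCoeff n (k + 1) v = (v + k) / n * szaszCoeff n k v := by
  rw [szaszCoeff, szaszCoeff, Nat.ascFactorial_succ, pow_succ]
  push_cast
  ring

lemma baskakovBasis_mul_szaszCoeff_succ {n : ℕ} (hn : n ≠ 0) (k v : ℕ) {z : ℂ} (hz : 1 + z ≠ 0) :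
    baskakovBasis n v z * szaszCoeff n (k + 1) v
      = z * (1 + z) / n * (deriv (baskakovBasis n v) z * szaszCoeff n k v)
        + (n * z + k) / n * (baskakovBasis n v z * szaszCoeff n k v) := by
  rw [szaszCoeff_succ]
  field_simp
  linear_combination -szaszCoeff n k v * mul_deriv_baskakovBasis n v hz

lemma S_eq_baskakovSeries {n : ℕ} (hn : 1 ≤ n) (k : ℕ) {z : ℂ} (hz : -1 / 2 < z.re) :
    S n k z = baskakovSeries n (szaszCoeff n k) z := by
  have hcoeff (v : ℕ) : (n : ℂ) * szaszMoment n v k = szaszCoeff n k (v + 1) := by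
    rw [szaszCoeff, ← Complex.ofReal_natCast, ← Complex.ofReal_mul, natCast_mul_szaszMoment hn]
    push_cast
    rfl
  have hzero : baskakovBasis n 0 z * szaszCoeff n k 0 = (1 + z) ^ (-(n : ℤ)) * 0 ^ k := by
    rcases k with _ | k
    · simp [baskakovBasis, szaszCoeff]
    · simp [szaszCoeff, Nat.zero_ascFactorial]
  rw [S, baskakovSeries, (summable_baskakovBasis_mul (norm_szaszCoeff_le hn k) hz).tsum_eq_zero_add,
    hzero, add_comm, ← tsum_mul_left]
  simp only [← hcoeff]
  congr 2 with v
  ring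

/-- For `n ≥ 1`, `k ≥ 0` and `Re z > −1/2`, the recurrence
`S_{n,k+1}(z) = (z(1+z)/n) · S_{n,k}′(z) + ((nz+k)/n) · S_{n,k}(z)` holds. -/
theorem S_recurrence (n : ℕ) (hn : 1 ≤ n) (k : ℕ) (z : ℂ) (hz : -1/2 < z.re) :
    S n (k + 1) z
      = (z * (1 + z) / (n : ℂ)) * deriv (S n k) z + (((n : ℂ) * z + (k : ℂ)) / (n : ℂ)) * S n k z := by
  have hS (j : ℕ) : S n j =ᶠ[𝓝 z] baskakovSeries n (szaszCoeff n j) :=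
    Filter.eventually_of_mem ((isOpen_lt continuous_const Complex.continuous_re).mem_nhds hz)
      fun w hw => S_eq_baskakovSeries hn j hw
  rw [(hS k).deriv_eq, (hS (k + 1)).eq_of_nhds, (hS k).eq_of_nhds]
  refine (summable_baskakovBasis_mul (norm_szaszCoeff_le hn (k + 1)) hz).hasSum.unique ?_
  have h := ((hasSum_deriv_baskakovSeries (n := n) (norm_szaszCoeff_le hn k) hz).mul_left
    (z * (1 + z) / n)).add
      ((summable_baskakovBasis_mul (n := n) (norm_szaszCoeff_le hn k) hz).hasSum.mul_left
        ((n * z + k) / n))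
  simp only [← baskakovBasis_mul_szaszCoeff_succ (Nat.one_le_iff_ne_zero.mp hn) k _
    (one_add_ne_zero_of_neg_half_lt_re hz)] at h
  exact h
end

section
/- Let r ≥ 1 be a real number and let n ∈ ℕ satisfy n ≥ r + 2. Then for every k ≥ 1, sup_{|z| ≤ r} |T_{n,k}(z) − z^k| ≤ (r+2) · (k+1)! · r^{k−1} / n. -/
/-!
`T n k` is the evaluation of a polynomial `TPoly n k` with nonnegative coefficients, of degree at
most `k` and of the form `X ^ k + q`. Hence `‖T n k z - z ^ k‖ ≤ q(r) = TPoly n k (r) - r ^ k`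
for `‖z‖ ≤ r`. At a real `r ≥ 0` the Euler-type bound `r p'(r) ≤ k p(r)` for `deg p ≤ k` turns the
recursion into `TPoly n (k+1) (r) ≤ (r + k (r+2)/n) TPoly n k (r)`, and with `a = (r+2)/n ≤ 1` and
`r ≥ 1` the product `∏_{j<k} (r + j a)` exceeds `r ^ k` by at most `a (k+1)! r^(k-1)`.
-/

/-- The polynomials `T_{n,k}` defined by `T_{n,0}(z) = 1` and
`T_{n,k+1}(z) = (z(1+z)/n) · T_{n,k}′(z) + ((nz+k)/n) · T_{n,k}(z)`. -/
noncomputable def T (n : ℕ) : ℕ → ℂ → ℂ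
  | 0 => fun _ => 1
  | k + 1 => fun z =>
      (z * (1 + z) / (n : ℂ)) * deriv (T n k) z + (((n : ℂ) * z + (k : ℂ)) / (n : ℂ)) * T n k z

open Polynomial NNReal

theorem natDegree_X_mul_derivative_le {R : Type*} [Semiring R] (p : R[X]) :
    (X * derivative p).natDegree ≤ p.natDegree := by
  rcases Nat.eq_zero_or_pos p.natDegree with h | h
  · simp [derivative_of_natDegree_zero h]
  · refine natDegree_mul_le.trans ?_
    have := natDegree_derivative_le p
    have := natDegree_X_le (R := R)
    omega

theorem coeff_X_mul_derivative {R : Type*} [Semiring R] (p : R[X]) (i : ℕ) :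
    (X * derivative p).coeff i = p.coeff i * i := by
  cases i <;> simp [coeff_derivative]

theorem norm_aeval_le_aeval_of_norm_le {A : Type*} [SeminormedRing A] [NormedAlgebra ℝ A]
    [NormOneClass A] (p : ℝ≥0[X]) {z : A} {r : ℝ} (hz : ‖z‖ ≤ r) :
    ‖aeval z p‖ ≤ aeval r p := by
  rw [aeval_eq_sum_range, aeval_eq_sum_range]
  refine (norm_sum_le _ _).trans (Finset.sum_le_sum fun i _ => ?_)
  rw [NNReal.smul_def, NNReal.smul_def, norm_smul, smul_eq_mul, NNReal.norm_eq]
  gcongr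
  exact (norm_pow_le z i).trans (pow_le_pow_left₀ (norm_nonneg z) hz i)

theorem mul_aeval_derivative_le (p : ℝ≥0[X]) {k : ℕ} (hp : p.natDegree ≤ k) {r : ℝ}
    (hr : 0 ≤ r) : r * aeval r (derivative p) ≤ k * aeval r p := by
  have hXp : (X * derivative p).natDegree < k + 1 :=
    (natDegree_X_mul_derivative_le p).trans_lt (Nat.lt_succ_of_le hp)
  have hmul : r * aeval r (derivative p) = aeval r (X * derivative p) := by simp
  rw [hmul, aeval_eq_sum_range' hXp,
    aeval_eq_sum_range' (Nat.lt_succ_of_le hp), Finset.mul_sum]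
  refine Finset.sum_le_sum fun i hi => ?_
  have hik : (i : ℝ) ≤ k := by exact_mod_cast Finset.mem_range_succ_iff.mp hi
  rw [coeff_X_mul_derivative, NNReal.smul_def, NNReal.smul_def, smul_eq_mul, smul_eq_mul]
  push_cast
  rw [mul_right_comm, mul_comm (k : ℝ)]
  gcongr

theorem le_pow_add_mul_factorial_mul_pow {x : ℕ → ℝ} {r a : ℝ} (hr : 1 ≤ r) (ha₀ : 0 ≤ a)
    (ha₁ : a ≤ 1) (h₀ : x 0 = 1) (hstep : ∀ k : ℕ, x (k + 1) ≤ (r + k * a) * x k) {k : ℕ}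
    (hk : 1 ≤ k) : x k ≤ r ^ k + a * (k + 1).factorial * r ^ (k - 1) := by
  induction k, hk using Nat.le_induction with
  | base =>
    have hx₁ : x 1 ≤ r := by simpa [h₀] using hstep 0
    simp only [Nat.reduceAdd, Nat.factorial_two, Nat.sub_self, pow_zero, pow_one]
    push_cast
    linarith
  | succ k hk ih =>
    obtain ⟨j, rfl⟩ : ∃ j, k = j + 1 := ⟨k - 1, by omega⟩
    simp only [Nat.add_sub_cancel] at ih ⊢
    set F : ℝ := ((j + 2).factorial : ℝ)
    have hF : ((j + 1 + 1 + 1).factorial : ℝ) = (j + 3) * F := by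
      push_cast [F, Nat.factorial_succ]; ring
    have hjF : (j : ℝ) + 1 ≤ F := by
      simp only [F]
      exact_mod_cast (by omega : j + 1 ≤ j + 2).trans (Nat.self_le_factorial _)
    have key : ((j : ℝ) + 1) * r + F * r + (j + 1) * a * F ≤ (j + 3) * F * r := by
      have hjr : ((j : ℝ) + 1) * r ≤ F * r := by gcongr
      have haF : ((j : ℝ) + 1) * F * a ≤ ((j : ℝ) + 1) * F * r := by gcongr; linarith
      linarith
    calc x (j + 1 + 1) ≤ (r + (j + 1 : ℕ) * a) * x (j + 1) := hstep _
      _ ≤ (r + (j + 1 : ℕ) * a) * (r ^ (j + 1) + a * F * r ^ j) := by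
        gcongr
      _ = r ^ (j + 1 + 1) + a * r ^ j * ((j + 1) * r + F * r + (j + 1) * a * F) := by
        push_cast; ring
      _ ≤ r ^ (j + 1 + 1) + a * r ^ j * ((j + 3) * F * r) := by gcongr
      _ = _ := by rw [hF]; ring

/-- Over `ℝ≥0` the nonnegativity of the coefficients is built in. -/
noncomputable def TPoly (n : ℕ) : ℕ → ℝ≥0[X]
  | 0 => 1
  | k + 1 => C (n : ℝ≥0)⁻¹ *
      (X * (1 + X) * derivative (TPoly n k) + (C (n : ℝ≥0) * X + C (k : ℝ≥0)) * TPoly n k)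

theorem T_eq_aeval_TPoly (n k : ℕ) : T n k = fun z => aeval z (TPoly n k) := by
  induction k with
  | zero => funext z; simp [T, TPoly]
  | succ k ih =>
    funext z
    simp only [T, TPoly, ih, Polynomial.deriv_aeval, map_mul, map_add, map_one, aeval_X, aeval_C,
      map_inv₀, map_natCast]
    ring

theorem TPoly_natDegree_le (n k : ℕ) : (TPoly n k).natDegree ≤ k := by
  induction k with
  | zero => simp [TPoly]
  | succ k ih =>
    have h1 : (1 + X : ℝ≥0[X]).natDegree ≤ 1 :=
      natDegree_add_le_of_degree_le (by simp) natDegree_X_le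
    have h2 : (C (n : ℝ≥0) * X + C (k : ℝ≥0)).natDegree ≤ 1 :=
      natDegree_add_le_of_degree_le ((natDegree_C_mul_le _ _).trans natDegree_X_le) (by simp)
    have h3 : (X * (1 + X) * derivative (TPoly n k)).natDegree ≤ 1 + k := by
      rw [mul_comm X, mul_assoc]
      exact natDegree_mul_le_of_le h1 ((natDegree_X_mul_derivative_le _).trans ih)
    have h4 := natDegree_mul_le_of_le h2 ih
    exact (natDegree_C_mul_le _ _).trans <|
      (natDegree_add_le_of_degree_le h3 h4).trans_eq (add_comm 1 k)

theorem exists_TPoly_eq_X_pow_add {n : ℕ} (hn : n ≠ 0) (k : ℕ) :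
    ∃ q : ℝ≥0[X], TPoly n k = X ^ k + q := by
  induction k with
  | zero => exact ⟨0, by simp [TPoly]⟩
  | succ k ih =>
    obtain ⟨q, hq⟩ := ih
    have hinv : C (n : ℝ≥0)⁻¹ * C (n : ℝ≥0) = 1 := by
      rw [← C_mul, inv_mul_cancel₀ (by exact_mod_cast hn), C_1]
    have h : TPoly n (k + 1) = C (n : ℝ≥0)⁻¹ * C (n : ℝ≥0) * X ^ (k + 1) + C (n : ℝ≥0)⁻¹ *
        (X * (1 + X) * derivative (TPoly n k) + C (k : ℝ≥0) * X ^ k +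
          (C (n : ℝ≥0) * X + C (k : ℝ≥0)) * q) := by
      rw [TPoly, hq]; ring
    rw [hinv, one_mul] at h
    exact ⟨_, h⟩

theorem aeval_TPoly_succ_le {n : ℕ} (hn : n ≠ 0) (k : ℕ) {r : ℝ} (hr : 0 ≤ r) :
    aeval r (TPoly n (k + 1)) ≤ (r + k * ((r + 2) / n)) * aeval r (TPoly n k) := by
  have hn' : (n : ℝ) ≠ 0 := by exact_mod_cast hn
  have hderiv := mul_aeval_derivative_le (TPoly n k) (TPoly_natDegree_le n k) hr
  calc aeval r (TPoly n (k + 1))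
      = (n : ℝ)⁻¹ * ((1 + r) * (r * aeval r (derivative (TPoly n k)))
          + (n * r + k) * aeval r (TPoly n k)) := by
        simp only [TPoly, map_mul, map_add, map_one, aeval_X, aeval_C, map_inv₀, map_natCast]
        ring
    _ ≤ (n : ℝ)⁻¹ * ((1 + r) * (k * aeval r (TPoly n k)) + (n * r + k) * aeval r (TPoly n k)) := by
        gcongr
    _ = _ := by field_simp; ring

/-- For `r ≥ 1`, `n ≥ r + 2` and `k ≥ 1`,
`sup_{|z| ≤ r} |T_{n,k}(z) − z^k| ≤ (r+2)·(k+1)!·r^{k−1}/n`. -/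
theorem T_approx_monomial (r : ℝ) (hr : 1 ≤ r) (n : ℕ) (hn : r + 2 ≤ (n : ℝ)) (k : ℕ)
    (hk : 1 ≤ k) (z : ℂ) (hz : ‖z‖ ≤ r) :
    ‖T n k z - z ^ k‖ ≤ (r + 2) * ((k + 1).factorial : ℝ) * r ^ (k - 1) / n := by
  have hn_pos : (0 : ℝ) < n := by linarith
  have hn_ne : n ≠ 0 := by exact_mod_cast hn_pos.ne'
  obtain ⟨q, hq⟩ := exists_TPoly_eq_X_pow_add hn_ne k
  have hTq : T n k z - z ^ k = aeval z q := by simp [T_eq_aeval_TPoly, hq]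
  have hPq : aeval r (TPoly n k) = r ^ k + aeval r q := by simp [hq]
  have hP := le_pow_add_mul_factorial_mul_pow (x := fun k => aeval r (TPoly n k)) hr
    (by positivity) ((div_le_one hn_pos).mpr hn) (by simp [TPoly])
    (fun k => aeval_TPoly_succ_le hn_ne k (by linarith)) hk
  calc ‖T n k z - z ^ k‖ = ‖aeval z q‖ := by rw [hTq]
    _ ≤ aeval r q := norm_aeval_le_aeval_of_norm_le q hz
    _ ≤ (r + 2) / n * (k + 1).factorial * r ^ (k - 1) := by simp only [hPq] at hP; linarith
    _ = _ := by ring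
end
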